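/- arXiv:0806.0282 — 8 statements merged into one kernel-verified Lean document; each statement's English description precedes it below -/
import Mathlib

section
/- Let x* : V → ℝ satisfy x*_a + x*_b ≤ 1 for every I-edge {a, b} and x*_a + x*_b ≥ ω for every K-edge {a, b}, where ω is a real number. If there exists a (v, I, K, u)-walk of K-length n, then x*_v − x*_u ≤ (1 − ω)·n. -/
/-- An undirected multigraph with two-coloured vertices and two-coloured edges.
`isX v` means `v` is an x-vertex (otherwise `v` is a 0-vertex);
`isK e` means `e` is a K-edge (otherwise `e` is an I-edge). -/
structure ColoredMultigraph (V : Type) (E : Type) where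
  ends : E → Sym2 V
  isX : V → Prop
  isK : E → Prop

namespace ColoredMultigraph

variable {V E : Type} (G : ColoredMultigraph V E)

/-- Edge `e` joins vertices `a` and `b`. -/
def Joins (e : E) (a b : V) : Prop := G.ends e = s(a, b)

/-- `AltWalk G v c c' u n` : there is an alternating walk from `v` to `u` whose
first edge has colour `c` (`true` = K-edge, `false` = I-edge), whose last edge
has colour `c'`, and whose K-length (number of K-edges) is `n`. -/
inductive AltWalk : V → Bool → Bool → V → ℕ → Prop
  | single (e : E) (a b : V) (c : Bool) :
      G.Joins e a b → (G.isK e ↔ c = true) → AltWalk a c c b (cond c 1 0)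
  | cons (e : E) (a b : V) (c c' : Bool) (u : V) (n : ℕ) :
      G.Joins e a b → (G.isK e ↔ c = true) → AltWalk b (!c) c' u n →
      AltWalk a c c' u (cond c 1 0 + n)

/-- `a(v,X,Y,0)` : the minimum K-length of a `(v,X,Y,0)`-walk, that is, a walk
from `v` to some 0-vertex starting with an X-edge and ending with a Y-edge
(`∞` if no such walk exists). -/
noncomputable def walkInf (v : V) (X Y : Bool) : ℕ∞ :=
  sInf {n : ℕ∞ | ∃ m : ℕ, n = m ∧ ∃ u, G.AltWalk v X Y u m ∧ ¬ G.isX u}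

/-- `A(v,X)` : the maximum K-length of an alternating walk starting at `v` with
an X-edge (`∞` if walks of arbitrarily large K-length exist). -/
noncomputable def walkSup (v : V) (X : Bool) : ℕ∞ :=
  sSup {n : ℕ∞ | ∃ m : ℕ, n = m ∧ ∃ Y u, G.AltWalk v X Y u m}

/-- `b(v,X,Y,0) = min {a(v,X,Y,0), R}`. -/
noncomputable def bnd (R : ℕ) (v : V) (X Y : Bool) : ℕ∞ :=
  min (G.walkInf v X Y) (R : ℕ∞)

/-- `B(v,X) = min {A(v,X), R}`. -/
noncomputable def Bnd (R : ℕ) (v : V) (X : Bool) : ℕ∞ :=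
  min (G.walkSup v X) (R : ℕ∞)

/-- The value `p_v` chosen by the local algorithm:
`p_v = b(v,I,K,0)` if `a(v,K,K,0) ≤ R`, and
`p_v = min {b(v,I,K,0), B(v,K)}` otherwise. -/
noncomputable def pv (R : ℕ) (v : V) : ℕ∞ :=
  if G.walkInf v true true ≤ (R : ℕ∞) then G.bnd R v false true
  else min (G.bnd R v false true) (G.Bnd R v true)

/-- The value `q_v` chosen by the local algorithm:
`q_v = b(v,K,K,0)` if `a(v,I,K,0) ≤ R`, and
`q_v = min {b(v,K,K,0), B(v,I)}` otherwise. -/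
noncomputable def qv (R : ℕ) (v : V) : ℕ∞ :=
  if G.walkInf v false true ≤ (R : ℕ∞) then G.bnd R v true true
  else min (G.bnd R v true true) (G.Bnd R v false)

open Classical in
/-- The output value of the local algorithm: `p_v / (p_v + q_v)` at an x-vertex
`v`, and `0` at a 0-vertex. -/
noncomputable def xval (R : ℕ) (v : V) : ℝ :=
  if G.isX v then
    ((G.pv R v).toNat : ℝ) / (((G.pv R v).toNat : ℝ) + ((G.qv R v).toNat : ℝ))
  else 0

/-- Structural assumptions: every x-vertex is incident to at least one K-edge
and at least one I-edge, every 0-vertex is incident to exactly one edge, and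
every edge has at least one x-vertex endpoint. -/
def WellFormed : Prop :=
  (∀ v, G.isX v → ∃ e, v ∈ G.ends e ∧ G.isK e) ∧
  (∀ v, G.isX v → ∃ e, v ∈ G.ends e ∧ ¬ G.isK e) ∧
  (∀ v, ¬ G.isX v → ∃! e, v ∈ G.ends e) ∧
  (∀ e a b, G.Joins e a b → G.isX a ∨ G.isX b)

/-- A feasible solution: nonnegative, zero at 0-vertices, and satisfying
`x a + x b ≤ 1` for every I-edge `{a, b}`. -/
def Feasible (x : V → ℝ) : Prop :=
  (∀ a, 0 ≤ x a) ∧ (∀ a, ¬ G.isX a → x a = 0) ∧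
  (∀ e a b, G.Joins e a b → ¬ G.isK e → x a + x b ≤ 1)

/-- The utility `ω(x)` of a solution: the minimum (infimum) over K-edges
`{a, b}` of `x a + x b`. -/
noncomputable def utility (x : V → ℝ) : ℝ :=
  sInf {r : ℝ | ∃ e a b, G.Joins e a b ∧ G.isK e ∧ r = x a + x b}

end ColoredMultigraph


private lemma altwalk_key {V E : Type} (G : ColoredMultigraph V E) (xstar : V → ℝ) (ω : ℝ)
    (hI : ∀ e a b, G.Joins e a b → ¬ G.isK e → xstar a + xstar b ≤ 1)
    (hK : ∀ e a b, G.Joins e a b → G.isK e → ω ≤ xstar a + xstar b)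
    {a : V} {c c' : Bool} {u : V} {n : ℕ}
    (hw : G.AltWalk a c c' u n) :
    (cond c (-xstar a) (xstar a)) + (cond c' (-xstar u) (xstar u)) ≤
      ((n : ℝ) - cond c 1 0 + cond c' 0 1) - n * ω := by
  induction hw with
  | single e a b c hj hc =>
    cases c
    · have h := hI e a b hj (by simp [hc])
      simp only [cond_false, cond_true, Nat.cast_zero]
      linarith
    · have h := hK e a b hj (by simp [hc])
      simp only [cond_false, cond_true, Nat.cast_one]
      linarith
  | cons e a b c c' u m hj hc _ ih =>
    cases c
    · have h := hI e a b hj (by simp [hc])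
      simp only [cond_false, cond_true, Bool.not_false, Nat.cast_zero] at *
      cases c' <;> simp only [cond_false, cond_true] at * <;> push_cast at * <;> linarith
    · have h := hK e a b hj (by simp [hc])
      simp only [cond_false, cond_true, Bool.not_true, Nat.cast_one] at *
      cases c' <;> simp only [cond_false, cond_true] at * <;> push_cast at * <;> linarith

/-- Let `x* : V → ℝ` satisfy `x*_a + x*_b ≤ 1` for every
I-edge `{a, b}` and `x*_a + x*_b ≥ ω` for every K-edge `{a, b}`, where `ω` is a
real number. If there exists a `(v, I, K, u)`-walk of K-length `n`, then
`x*_v − x*_u ≤ (1 − ω) * n`. -/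
theorem stmt_3 {V E : Type} (G : ColoredMultigraph V E) (xstar : V → ℝ) (ω : ℝ)
    (hI : ∀ e a b, G.Joins e a b → ¬ G.isK e → xstar a + xstar b ≤ 1)
    (hK : ∀ e a b, G.Joins e a b → G.isK e → ω ≤ xstar a + xstar b)
    (v u : V) (n : ℕ) (hw : G.AltWalk v false true u n) :
    xstar v - xstar u ≤ (1 - ω) * n := by
  have h := altwalk_key G xstar ω hI hK hw
  simp only [cond_false, cond_true] at h
  linarith
end

section
/- Let x* : V → ℝ satisfy x*_a ≥ 0 for every vertex a, x*_a + x*_b ≤ 1 for every I-edge {a, b}, and x*_a + x*_b ≥ ω for every K-edge {a, b}, where ω is a real number. If there exists a (v, I, K, u)-walk of K-length n ≥ 1, then ω ≤ 1 + 1/n. -/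

theorem stmt4_aux {V E : Type} (G : ColoredMultigraph V E)
    (xstar : V → ℝ) (ω : ℝ)
    (hI : ∀ e a b, G.Joins e a b → ¬ G.isK e → xstar a + xstar b ≤ 1)
    (hK : ∀ e a b, G.Joins e a b → G.isK e → ω ≤ xstar a + xstar b) :
    ∀ a c c' u m, G.AltWalk a c c' u m → c' = true →
      ((c = false → (m : ℝ) * ω + xstar a ≤ (m : ℝ) + xstar u) ∧
       (c = true → (m : ℝ) * ω ≤ (m : ℝ) - 1 + xstar a + xstar u)) := by
  intro a c c' u m h
  induction h with
  | single e a b c hj hc =>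
    intro hc'
    subst hc'
    refine ⟨by simp, fun _ => ?_⟩
    have := hK e a b hj (hc.mpr rfl)
    simp only [cond_true]
    push_cast
    linarith
  | cons e a b c c' u n hj hc hrest IH =>
    intro hc'
    have IH' := IH hc'
    cases c with
    | false =>
      refine ⟨fun _ => ?_, by simp⟩
      have hke : ¬ G.isK e := fun h => by simpa using hc.mp h
      have h1 := hI e a b hj hke
      have h2 := IH'.2 (by simp)
      simp only [cond_false, Nat.zero_add]
      linarith
    | true =>
      refine ⟨by simp, fun _ => ?_⟩
      have h1 := hK e a b hj (hc.mpr rfl)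
      have h2 := IH'.1 (by simp)
      simp only [cond_true]
      push_cast
      linarith

/-- Let `x* : V → ℝ` satisfy `x*_a ≥ 0` for every vertex `a`,
`x*_a + x*_b ≤ 1` for every I-edge `{a, b}`, and `x*_a + x*_b ≥ ω` for every
K-edge `{a, b}`, where `ω` is a real number; moreover `x*_a = 0` for every
0-vertex `a`. If there exists a `(v, I, K, u)`-walk of K-length `n ≥ 1`, then
`ω ≤ 1 + 1/n`. -/
theorem stmt_4 {V E : Type} (G : ColoredMultigraph V E) (hG : G.WellFormed)
    (xstar : V → ℝ) (ω : ℝ)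
    (hpos : ∀ a, 0 ≤ xstar a)
    (h0 : ∀ a, ¬ G.isX a → xstar a = 0)
    (hI : ∀ e a b, G.Joins e a b → ¬ G.isK e → xstar a + xstar b ≤ 1)
    (hK : ∀ e a b, G.Joins e a b → G.isK e → ω ≤ xstar a + xstar b)
    (v u : V) (n : ℕ) (hn : 1 ≤ n) (hw : G.AltWalk v false true u n) :
    ω ≤ 1 + 1 / (n : ℝ) := by
  have hxu : xstar u ≤ 1 := by
    by_cases hx : G.isX u
    · obtain ⟨e, he, hek⟩ := hG.2.1 u hx
      obtain ⟨w, hw'⟩ := Sym2.mem_iff_exists.mp he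
      have := hI e u w hw' hek
      have := hpos w
      linarith
    · rw [h0 u hx]; norm_num
  have key := (stmt4_aux G xstar ω hI hK v false true u n hw rfl).1 rfl
  have hv := hpos v
  have hn' : (0:ℝ) < n := by exact_mod_cast hn
  rw [show (1:ℝ) + 1 / n = (n + 1) / n by field_simp]
  rw [le_div_iff₀ hn']
  linarith
end

section
/- Let x* : V → ℝ satisfy x*_a ≥ 0 for every vertex a, x*_a = 0 for every 0-vertex a, x*_a + x*_b ≤ 1 for every I-edge {a, b}, and x*_a + x*_b ≥ ω for every K-edge {a, b}, where ω is a real number. If there exists a (0, K, K, 0)-walk of K-length n ≥ 1 (an alternating walk whose first and last edges are K-edges and whose both endpoints are 0-vertices), then ω ≤ 1 − 1/n. -/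
/-- Let `x* : V → ℝ` satisfy `x*_a ≥ 0` for every vertex `a`,
`x*_a = 0` for every 0-vertex `a`, `x*_a + x*_b ≤ 1` for every I-edge `{a, b}`,
and `x*_a + x*_b ≥ ω` for every K-edge `{a, b}`, where `ω` is a real number.
If there exists a `(0, K, K, 0)`-walk of K-length `n ≥ 1`, then `ω ≤ 1 − 1/n`. -/
theorem stmt_5 {V E : Type} (G : ColoredMultigraph V E) (hG : G.WellFormed)
    (xstar : V → ℝ) (ω : ℝ)
    (hpos : ∀ a, 0 ≤ xstar a)
    (h0 : ∀ a, ¬ G.isX a → xstar a = 0)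
    (hI : ∀ e a b, G.Joins e a b → ¬ G.isK e → xstar a + xstar b ≤ 1)
    (hK : ∀ e a b, G.Joins e a b → G.isK e → ω ≤ xstar a + xstar b)
    (v u : V) (hv : ¬ G.isX v) (hu : ¬ G.isX u)
    (n : ℕ) (hn : 1 ≤ n) (hw : G.AltWalk v true true u n) :
    ω ≤ 1 - 1 / (n : ℝ) := by
  have key : ∀ a c c' w m, G.AltWalk a c c' w m → c' = true →
      cond c ((m : ℝ) * ω ≤ xstar a + xstar w + m - 1)
        ((m : ℝ) * ω + xstar a ≤ xstar w + m) := by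
    intro a c c' w m h
    induction h with
    | single e a b c hj hc =>
      intro hc'
      subst hc'
      have hKe : G.isK e := hc.mpr rfl
      have := hK e a b hj hKe
      simp only [cond_true]
      push_cast
      linarith
    | cons e a b c c' w m hj hc h ih =>
      intro hc'
      have ih' := ih hc'
      cases c with
      | true =>
        have hKe : G.isK e := hc.mpr rfl
        have h1 := hK e a b hj hKe
        simp only [Bool.not_true, cond_false] at ih'
        simp only [cond_true]
        push_cast
        linarith
      | false =>
        have hIe : ¬ G.isK e := by
          intro h'
          exact absurd (hc.mp h') (by simp)
        have h1 := hI e a b hj hIe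
        simp only [Bool.not_false, cond_true] at ih'
        simp only [cond_false]
        push_cast
        linarith
  have hkey := key v true true u n hw rfl
  simp only [cond_true] at hkey
  have hv0 : xstar v = 0 := h0 v hv
  have hu0 : xstar u = 0 := h0 u hu
  have hn' : (0 : ℝ) < n := by exact_mod_cast hn
  have h2 : ω ≤ ((n : ℝ) - 1) / n := by
    rw [le_div_iff₀ hn']; linarith
  calc ω ≤ ((n : ℝ) - 1) / n := h2
    _ = 1 - 1 / n := by rw [sub_div, div_self hn'.ne']
end

section
/- If v and u are I-adjacent x-vertices (some I-edge joins v and u), then the values chosen by the local algorithm satisfy p_v ≤ q_u. -/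
/-- If `v` and `u` are I-adjacent x-vertices, then the values
chosen by the local algorithm satisfy `p_v ≤ q_u`. -/
theorem stmt_8 {V E : Type} (G : ColoredMultigraph V E) (hG : G.WellFormed)
    (R : ℕ) (hR : 1 ≤ R) (v u : V) (hv : G.isX v) (hu : G.isX u)
    (hadj : ∃ e, G.Joins e v u ∧ ¬ G.isK e) :
    G.pv R v ≤ G.qv R u := by
  obtain ⟨e, hj, hk⟩ := hadj
  have hj' : G.Joins e u v := by
    unfold ColoredMultigraph.Joins at hj ⊢
    rw [hj, Sym2.eq_swap]
  have prep1 : ∀ Y w n, G.AltWalk u true Y w n → G.AltWalk v false Y w n := by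
    intro Y w n h
    have h2 := ColoredMultigraph.AltWalk.cons e v u false Y w n hj
      (by simp [hk]) (by simpa using h)
    simpa using h2
  have prep2 : ∀ Y w n, G.AltWalk v true Y w n → G.AltWalk u false Y w n := by
    intro Y w n h
    have h2 := ColoredMultigraph.AltWalk.cons e u v false Y w n hj'
      (by simp [hk]) (by simpa using h)
    simpa using h2
  have h1 : G.walkInf v false true ≤ G.walkInf u true true := by
    apply sInf_le_sInf
    rintro n ⟨m, rfl, w, hw, hx⟩
    exact ⟨m, rfl, w, prep1 _ _ _ hw, hx⟩
  have h2 : G.walkSup v true ≤ G.walkSup u false := by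
    apply sSup_le_sSup
    rintro n ⟨m, rfl, Y, w, hw⟩
    exact ⟨m, rfl, Y, w, prep2 _ _ _ hw⟩
  have h3 : G.walkInf u false true ≤ G.walkInf v true true := by
    apply sInf_le_sInf
    rintro n ⟨m, rfl, w, hw, hx⟩
    exact ⟨m, rfl, w, prep2 _ _ _ hw, hx⟩
  have hb : G.bnd R v false true ≤ G.bnd R u true true := min_le_min h1 le_rfl
  have hB : G.Bnd R v true ≤ G.Bnd R u false := min_le_min h2 le_rfl
  unfold ColoredMultigraph.pv ColoredMultigraph.qv
  split_ifs with hp hq hq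
  · exact hb
  · exact absurd (h3.trans hp) hq
  · exact (min_le_left _ _).trans hb
  · exact min_le_min hb hB
end

section
/- If v and u are I-adjacent x-vertices (some I-edge joins v and u), then the output values of the local algorithm satisfy x_v + x_u ≤ 1. Consequently, since 0-vertices are assigned the value 0 and each output value is at most 1, the output of the algorithm satisfies x_a + x_b ≤ 1 for every I-edge {a, b}, i.e. it is a feasible solution. -/
namespace ColoredMultigraph

variable {V E : Type} (G : ColoredMultigraph V E)

lemma joins_symm' {e : E} {a b : V} (h : G.Joins e a b) : G.Joins e b a := by
  unfold Joins at h ⊢; rw [h, Sym2.eq_swap]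

lemma walkInf_prepend {e : E} {v u : V} (h : G.Joins e v u) (hI : ¬ G.isK e) :
    G.walkInf v false true ≤ G.walkInf u true true := by
  apply sInf_le_sInf
  rintro n ⟨m, rfl, w, hw, hx⟩
  refine ⟨m, rfl, w, ?_, hx⟩
  have := AltWalk.cons (G := G) e v u false true w m h (by simp [hI]) (by simpa using hw)
  simpa using this

lemma walkSup_prepend {e : E} {v u : V} (h : G.Joins e v u) (hI : ¬ G.isK e) :
    G.walkSup u true ≤ G.walkSup v false := by
  apply sSup_le_sSup
  rintro n ⟨m, rfl, Y, w, hw⟩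
  refine ⟨m, rfl, Y, w, ?_⟩
  have := AltWalk.cons (G := G) e v u false Y w m h (by simp [hI]) (by simpa using hw)
  simpa using this

lemma pv_le_bnd (R : ℕ) (v : V) : G.pv R v ≤ G.bnd R v false true := by
  unfold pv; split
  · exact le_rfl
  · exact min_le_left _ _

lemma pv_le_qv {v u : V} {e : E} (hj : G.Joins e v u) (hI : ¬ G.isK e) (R : ℕ) :
    G.pv R v ≤ G.qv R u := by
  have hj' := G.joins_symm' hj
  have h1 : G.walkInf v false true ≤ G.walkInf u true true := G.walkInf_prepend hj hI
  have h2 : G.walkInf u false true ≤ G.walkInf v true true := G.walkInf_prepend hj' hI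
  have h3 : G.walkSup v true ≤ G.walkSup u false := G.walkSup_prepend hj' hI
  have hbb : G.bnd R v false true ≤ G.bnd R u true true := min_le_min h1 le_rfl
  have hpb := G.pv_le_bnd R v
  unfold qv
  split
  · exact hpb.trans hbb
  · next hcond =>
    refine le_min (hpb.trans hbb) ?_
    have hv : ¬ G.walkInf v true true ≤ (R : ℕ∞) := fun h => hcond (h2.trans h)
    have hpB : G.pv R v ≤ G.Bnd R v true := by
      unfold pv; rw [if_neg hv]; exact min_le_right _ _
    exact hpB.trans (min_le_min h3 le_rfl)

lemma qv_ne_top (R : ℕ) (v : V) : G.qv R v ≠ ⊤ := by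
  have h : G.qv R v ≤ (R : ℕ∞) := by
    unfold qv; split
    · exact min_le_right _ _
    · exact (min_le_left _ _).trans (min_le_right _ _)
  exact fun ht => by simp [ht] at h

lemma xval_nonneg (R : ℕ) (v : V) : 0 ≤ G.xval R v := by
  unfold xval; split
  · positivity
  · exact le_rfl

lemma xval_le_one (R : ℕ) (v : V) : G.xval R v ≤ 1 := by
  unfold xval; split
  · exact div_le_one_of_le₀ (le_add_of_nonneg_right (by positivity)) (by positivity)
  · exact zero_le_one

lemma frac_add_le_one {P Q P' Q' : ℕ} (h1 : P ≤ Q') (h2 : P' ≤ Q) :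
    (P : ℝ) / ((P : ℝ) + (Q : ℝ)) + (P' : ℝ) / ((P' : ℝ) + (Q' : ℝ)) ≤ 1 := by
  have habs : ∀ A B : ℕ, (A : ℝ) / ((A : ℝ) + (B : ℝ)) ≤ 1 := fun A B =>
    div_le_one_of_le₀ (le_add_of_nonneg_right (by positivity)) (by positivity)
  rcases Nat.eq_zero_or_pos P with hP | hP
  · subst hP; simpa using habs P' Q'
  rcases Nat.eq_zero_or_pos P' with hP' | hP'
  · subst hP'; simpa using habs P Q
  have hQ : 0 < Q := lt_of_lt_of_le hP' h2
  have hQ' : 0 < Q' := lt_of_lt_of_le hP h1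
  have hd1 : (0 : ℝ) < (P : ℝ) + (Q : ℝ) := by positivity
  have hd2 : (0 : ℝ) < (P' : ℝ) + (Q' : ℝ) := by
    have : (0:ℝ) < (P' : ℝ) := by exact_mod_cast hP'
    positivity
  rw [div_add_div _ _ hd1.ne' hd2.ne', div_le_one (mul_pos hd1 hd2)]
  have c1 : (P : ℝ) ≤ (Q' : ℝ) := by exact_mod_cast h1
  have c2 : (P' : ℝ) ≤ (Q : ℝ) := by exact_mod_cast h2
  nlinarith [mul_le_mul c1 c2 (by positivity) (by positivity)]

end ColoredMultigraph

/-- If `v` and `u` are I-adjacent x-vertices, then the output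
values of the local algorithm satisfy `x_v + x_u ≤ 1`. Consequently, since
0-vertices are assigned the value `0` and each output value is at most `1`, the
output of the algorithm satisfies `x_a + x_b ≤ 1` for every I-edge `{a, b}`,
i.e. it is a feasible solution. -/
theorem stmt_9 {V E : Type} (G : ColoredMultigraph V E) (hG : G.WellFormed)
    (R : ℕ) (hR : 1 ≤ R) :
    (∀ v u : V, G.isX v → G.isX u → (∃ e, G.Joins e v u ∧ ¬ G.isK e) →
      G.xval R v + G.xval R u ≤ 1) ∧
    (∀ e a b, G.Joins e a b → ¬ G.isK e → G.xval R a + G.xval R b ≤ 1) := by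
  have key : ∀ v u : V, G.isX v → G.isX u → (∃ e, G.Joins e v u ∧ ¬ G.isK e) →
      G.xval R v + G.xval R u ≤ 1 := by
    rintro v u hv hu ⟨e, hj, hI⟩
    have h1 : G.pv R v ≤ G.qv R u := G.pv_le_qv hj hI R
    have h2 : G.pv R u ≤ G.qv R v := G.pv_le_qv (G.joins_symm' hj) hI R
    have t1 : (G.pv R v).toNat ≤ (G.qv R u).toNat :=
      ENat.toNat_le_toNat h1 (G.qv_ne_top R u)
    have t2 : (G.pv R u).toNat ≤ (G.qv R v).toNat :=
      ENat.toNat_le_toNat h2 (G.qv_ne_top R v)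
    unfold ColoredMultigraph.xval
    rw [if_pos hv, if_pos hu]
    exact ColoredMultigraph.frac_add_le_one t1 t2
  refine ⟨key, ?_⟩
  intro e a b hj hI
  by_cases ha : G.isX a
  · by_cases hb : G.isX b
    · exact key a b ha hb ⟨e, hj, hI⟩
    · have : G.xval R b = 0 := by unfold ColoredMultigraph.xval; rw [if_neg hb]
      rw [this, add_zero]; exact G.xval_le_one R a
  · have : G.xval R a = 0 := by unfold ColoredMultigraph.xval; rw [if_neg ha]
    rw [this, zero_add]; exact G.xval_le_one R b
end

section
/- Let v be an x-vertex and u a 0-vertex that are K-adjacent (some K-edge joins v and u), and suppose a(v, I, K, 0) ≤ R. Then for every feasible solution x*, the output values of the local algorithm satisfy x_v + x_u ≥ ω(x*), where x_u = 0. -/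
namespace ColoredMultigraph

variable {V E : Type} (G : ColoredMultigraph V E)

/-! At `v` the algorithm outputs `p_v = a(v,I,K,0) =: m` and `q_v = 1` (the K-edge to `u` is a
`(v,K,K,0)`-walk), so `x_v = m / (m + 1)`. Along a shortest `(v,I,K,0)`-walk the feasibility
constraints of the I-edges and the utility bounds of the K-edges telescope to
`m ω + x_v ≤ m`, while the K-edge `{v, u}` gives `ω ≤ x_v`; together `(m + 1) ω ≤ m`. -/

variable {G}

lemma utility_le_of_joins {x : V → ℝ} (hx : 0 ≤ x) {e : E} {a b : V}
    (h : G.Joins e a b) (hK : G.isK e) : G.utility x ≤ x a + x b :=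
  csInf_le ⟨0, by rintro r ⟨e, a, b, -, -, rfl⟩; exact add_nonneg (hx a) (hx b)⟩
    ⟨e, a, b, h, hK, rfl⟩

lemma AltWalk.one_le_of_first_K {v u : V} {c' : Bool} {m : ℕ}
    (W : G.AltWalk v true c' u m) : 1 ≤ m := by
  cases W <;> simp

/-- The term `cond c (1 - x v) (x v)` makes both inductive steps linear: a first K-edge `{v, b}`
contributes `ω ≤ x v + x b`, a first I-edge `{v, b}` contributes `x v ≤ 1 - x b`. -/
lemma AltWalk.kLength_mul_utility_add_le {x : V → ℝ} (hx : G.Feasible x) {v u : V}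
    {c c' : Bool} {m : ℕ} (W : G.AltWalk v c c' u m) (hc' : c' = true) :
    m * G.utility x + cond c (1 - x v) (x v) ≤ m + x u := by
  induction W with
  | single e a b c he hc =>
    subst hc'
    have := utility_le_of_joins hx.1 he (hc.mpr rfl)
    simp only [cond_true, Nat.cast_one]
    linarith
  | cons e a b c c' u n he hc W ih =>
    have ih := ih hc'
    cases c with
    | true =>
      have := utility_le_of_joins hx.1 he (hc.mpr rfl)
      simp only [Bool.not_true, cond_false, cond_true] at ih ⊢
      push_cast
      linarith
    | false =>
      have := hx.2.2 e a b he (by simpa using hc)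
      simp only [Bool.not_false, cond_false, cond_true] at ih ⊢
      push_cast
      linarith

lemma succ_mul_utility_le_of_altWalk {x : V → ℝ} (hx : G.Feasible x) {v u w : V} {e : E}
    {m : ℕ} (he : G.Joins e v u) (hK : G.isK e) (hu : ¬ G.isX u)
    (W : G.AltWalk v false true w m) (hw : ¬ G.isX w) :
    ((m : ℝ) + 1) * G.utility x ≤ m := by
  have hwalk := W.kLength_mul_utility_add_le hx rfl
  have hedge := utility_le_of_joins hx.1 he hK
  simp only [cond_false, hx.2.1 w hw, hx.2.1 u hu] at hwalk hedge
  linarith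

lemma walkInf_true_true_eq_one {v u : V} {e : E} (he : G.Joins e v u) (hK : G.isK e)
    (hu : ¬ G.isX u) : G.walkInf v true true = 1 := by
  refine le_antisymm (sInf_le ⟨1, by simp, u, ?_, hu⟩) (le_sInf ?_)
  · simpa using AltWalk.single e v u true he (by simp [hK])
  · rintro n ⟨m, rfl, _, W, -⟩
    exact_mod_cast W.one_le_of_first_K

lemma exists_altWalk_of_walkInf_ne_top {v : V} {X Y : Bool} (h : G.walkInf v X Y ≠ ⊤) :
    ∃ m : ℕ, G.walkInf v X Y = m ∧ ∃ u, G.AltWalk v X Y u m ∧ ¬ G.isX u := by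
  have hne : {n : ℕ∞ | ∃ m : ℕ, n = m ∧ ∃ u, G.AltWalk v X Y u m ∧ ¬ G.isX u}.Nonempty :=
    Set.nonempty_iff_ne_empty.mpr fun h' => h (by rw [walkInf, h', sInf_empty])
  exact csInf_mem hne

lemma xval_eq_of_walkInf {R m : ℕ} (hR : 1 ≤ R) (hmR : m ≤ R) {v : V} (hv : G.isX v)
    (hKK : G.walkInf v true true = 1) (hIK : G.walkInf v false true = m) :
    G.xval R v = m / (m + 1) := by
  have hR' : (1 : ℕ∞) ≤ R := by exact_mod_cast hR
  have hmR' : (m : ℕ∞) ≤ R := by exact_mod_cast hmR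
  have hp : G.pv R v = m := by
    rw [pv, hKK, if_pos hR', bnd, hIK, min_eq_left hmR']
  have hq : G.qv R v = 1 := by
    rw [qv, hIK, if_pos hmR', bnd, hKK, min_eq_left hR']
  simp [xval, hv, hp, hq]

end ColoredMultigraph

theorem stmt_10_general {V E : Type} (G : ColoredMultigraph V E)
    (R : ℕ) (hR : 1 ≤ R) (v u : V) (hv : G.isX v) (hu : ¬ G.isX u)
    (hadj : ∃ e, G.Joins e v u ∧ G.isK e)
    (ha : G.walkInf v false true ≤ (R : ℕ∞))
    (xstar : V → ℝ) (hxstar : G.Feasible xstar) :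
    G.xval R u = 0 ∧ G.utility xstar ≤ G.xval R v + G.xval R u := by
  obtain ⟨e, he, hK⟩ := hadj
  obtain ⟨m, hm, w, W, hw⟩ :=
    G.exists_altWalk_of_walkInf_ne_top (ne_top_of_le_ne_top (ENat.natCast_ne_top R) ha)
  have hmR : m ≤ R := by exact_mod_cast hm ▸ ha
  have hxu : G.xval R u = 0 := if_neg hu
  refine ⟨hxu, ?_⟩
  rw [hxu, add_zero, G.xval_eq_of_walkInf hR hmR hv (G.walkInf_true_true_eq_one he hK hu) hm,
    le_div_iff₀ (by positivity), mul_comm]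
  exact G.succ_mul_utility_le_of_altWalk hxstar he hK hu W hw

/-- Let `v` be an x-vertex and `u` a 0-vertex that are
K-adjacent, and suppose `a(v,I,K,0) ≤ R`. Then for every feasible solution
`x*`, the output values of the local algorithm satisfy `x_v + x_u ≥ ω(x*)`,
where `x_u = 0`. -/
theorem stmt_10 {V E : Type} (G : ColoredMultigraph V E) (hG : G.WellFormed)
    (R : ℕ) (hR : 1 ≤ R) (v u : V) (hv : G.isX v) (hu : ¬ G.isX u)
    (hadj : ∃ e, G.Joins e v u ∧ G.isK e)
    (ha : G.walkInf v false true ≤ (R : ℕ∞))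
    (xstar : V → ℝ) (hxstar : G.Feasible xstar) :
    G.xval R u = 0 ∧ G.utility xstar ≤ G.xval R v + G.xval R u :=
  stmt_10_general G R hR v u hv hu hadj ha xstar hxstar
end

section
/- Let v be an x-vertex and u a 0-vertex that are K-adjacent (some K-edge joins v and u), and suppose a(v, I, K, 0) > R. Then for every feasible solution x*, the output values of the local algorithm satisfy x_v + x_u ≥ (1 − 1/R)·ω(x*), where x_u = 0. -/
/-- Let `v` be an x-vertex and `u` a 0-vertex that are
K-adjacent, and suppose `a(v,I,K,0) > R`. Then for every feasible solution
`x*`, the output values of the local algorithm satisfy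
`x_v + x_u ≥ (1 − 1/R) * ω(x*)`, where `x_u = 0`. -/
theorem stmt_11 {V E : Type} (G : ColoredMultigraph V E) (hG : G.WellFormed)
    (R : ℕ) (hR : 1 ≤ R) (v u : V) (hv : G.isX v) (hu : ¬ G.isX u)
    (hadj : ∃ e, G.Joins e v u ∧ G.isK e)
    (ha : (R : ℕ∞) < G.walkInf v false true)
    (xstar : V → ℝ) (hxstar : G.Feasible xstar) :
    G.xval R u = 0 ∧
      (1 - 1 / (R : ℝ)) * G.utility xstar ≤ G.xval R v + G.xval R u := by
  obtain ⟨e, he, heK⟩ := hadj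
  obtain ⟨hpos, hzero, hI⟩ := hxstar
  -- a (v,K,K,0)-walk of K-length 1
  have hwalk1 : G.AltWalk v true true u 1 := by
    have := ColoredMultigraph.AltWalk.single (G := G) e v u true he (by simp [heK])
    simpa using this
  have hinf1 : G.walkInf v true true ≤ 1 := by
    apply sInf_le
    exact ⟨1, by simp, u, hwalk1, hu⟩
  have hR1 : (1 : ℕ∞) ≤ (R : ℕ∞) := by exact_mod_cast hR
  have hpv : G.pv R v = (R : ℕ∞) := by
    rw [ColoredMultigraph.pv, if_pos (hinf1.trans hR1), ColoredMultigraph.bnd]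
    exact min_eq_right ha.le
  have hqv : G.qv R v ≤ 1 := by
    rw [ColoredMultigraph.qv, if_neg (not_le.mpr ha)]
    calc min (G.bnd R v true true) (G.Bnd R v false) ≤ G.bnd R v true true :=
          min_le_left _ _
      _ ≤ G.walkInf v true true := min_le_left _ _
      _ ≤ 1 := hinf1
  have hp' : ((G.pv R v).toNat : ℝ) = (R : ℝ) := by rw [hpv]; simp
  have hq' : (G.qv R v).toNat ≤ 1 := by
    have h := ENat.toNat_le_toNat hqv (by simp)
    simpa using h
  -- utility ≤ 1
  have hxu0 : xstar u = 0 := hzero u hu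
  obtain ⟨e', he'mem, he'notK⟩ := hG.2.1 v hv
  obtain ⟨b, hb⟩ := Sym2.mem_iff_exists.mp he'mem
  have hvb : xstar v + xstar b ≤ 1 := hI e' v b hb he'notK
  have hxv1 : xstar v ≤ 1 := by linarith [hpos b]
  have hω1 : G.utility xstar ≤ 1 := by
    have hbdd : BddBelow {r : ℝ | ∃ e a b, G.Joins e a b ∧ G.isK e ∧ r = xstar a + xstar b} := by
      refine ⟨0, fun r hr => ?_⟩
      obtain ⟨e₁, a₁, b₁, -, -, hr⟩ := hr
      rw [hr]; linarith [hpos a₁, hpos b₁]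
    have hmem : xstar v + xstar u ∈
        {r : ℝ | ∃ e a b, G.Joins e a b ∧ G.isK e ∧ r = xstar a + xstar b} :=
      ⟨e, v, u, he, heK, rfl⟩
    have := csInf_le hbdd hmem
    rw [ColoredMultigraph.utility]
    linarith
  refine ⟨by simp [ColoredMultigraph.xval, hu], ?_⟩
  rw [ColoredMultigraph.xval, if_pos hv, ColoredMultigraph.xval, if_neg hu, hp']
  set q' : ℕ := (G.qv R v).toNat with hq'def
  have hq1 : (q' : ℝ) ≤ 1 := by exact_mod_cast hq'
  have hq0 : (0 : ℝ) ≤ (q' : ℝ) := Nat.cast_nonneg _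
  have hRr : (1 : ℝ) ≤ (R : ℝ) := by exact_mod_cast hR
  have hRpos : (0 : ℝ) < (R : ℝ) := by linarith
  have hden : (0 : ℝ) < (R : ℝ) + (q' : ℝ) := by linarith
  have hfac : (0 : ℝ) ≤ 1 - 1 / (R : ℝ) := by
    have : 1 / (R : ℝ) ≤ 1 := by
      rw [div_le_one hRpos]; exact hRr
    linarith
  have h1 : (1 - 1 / (R : ℝ)) * G.utility xstar ≤ 1 - 1 / (R : ℝ) := by
    nlinarith
  have h2 : 1 - 1 / (R : ℝ) ≤ (R : ℝ) / ((R : ℝ) + (q' : ℝ)) := by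
    rw [le_div_iff₀ hden]
    have : (1 - 1 / (R : ℝ)) * ((R : ℝ) + (q' : ℝ))
        = (R : ℝ) + (q' : ℝ) - ((R : ℝ) + (q' : ℝ)) / (R : ℝ) := by ring
    rw [this]
    have h3 : (1 : ℝ) ≤ ((R : ℝ) + (q' : ℝ)) / (R : ℝ) := by
      rw [le_div_iff₀ hRpos]; linarith
    have h4 : (q' : ℝ) ≤ ((R : ℝ) + (q' : ℝ)) / (R : ℝ) := by
      rw [le_div_iff₀ hRpos]; nlinarith
    linarith
  linarith
end

section
/- Let v and u be K-adjacent x-vertices (some K-edge joins v and u), and suppose a(v, K, K, 0) > R, a(v, I, K, 0) ≤ R, a(u, K, K, 0) > R, and a(u, I, K, 0) > R. Then for every feasible solution x*, the output values of the local algorithm satisfy x_v + x_u ≥ ω(x*). -/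
lemma ColoredMultigraph.altWalk_last {V E : Type} {G : ColoredMultigraph V E}
    {v : V} {c c' : Bool} {u : V} {n : ℕ} (h : G.AltWalk v c c' u n) :
    ∃ e z, G.Joins e z u ∧ (G.isK e ↔ c' = true) := by
  induction h with
  | single e a b c hj hk => exact ⟨e, a, hj, hk⟩
  | cons e a b c c' u n hj hk _ ih => exact ih

/-- Let `v` and `u` be K-adjacent x-vertices, and suppose
`a(v,K,K,0) > R`, `a(v,I,K,0) ≤ R`, `a(u,K,K,0) > R`, and `a(u,I,K,0) > R`.
Then for every feasible solution `x*`, the output values of the local algorithm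
satisfy `x_v + x_u ≥ ω(x*)`. -/
theorem stmt_16 {V E : Type} (G : ColoredMultigraph V E) (hG : G.WellFormed)
    (R : ℕ) (hR : 1 ≤ R) (v u : V) (hv : G.isX v) (hu : G.isX u)
    (hadj : ∃ e, G.Joins e v u ∧ G.isK e)
    (hvKK : (R : ℕ∞) < G.walkInf v true true)
    (hvIK : G.walkInf v false true ≤ (R : ℕ∞))
    (huKK : (R : ℕ∞) < G.walkInf u true true)
    (huIK : (R : ℕ∞) < G.walkInf u false true)
    (xstar : V → ℝ) (hxstar : G.Feasible xstar) :
    G.utility xstar ≤ G.xval R v + G.xval R u := by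
  classical
  obtain ⟨e0, hj0, hk0⟩ := hadj
  have hj0' : G.Joins e0 u v := by
    unfold ColoredMultigraph.Joins at hj0 ⊢
    rw [hj0, Sym2.eq_swap]
  -- the (v, I, K, 0)-walk set is nonempty
  have hSne : ∃ m : ℕ, ∃ w, G.AltWalk v false true w m ∧ ¬ G.isX w := by
    by_contra h
    have hempty : {n : ℕ∞ | ∃ m : ℕ, n = (m : ℕ∞) ∧
        ∃ w, G.AltWalk v false true w m ∧ ¬ G.isX w} = ∅ := by
      refine Set.eq_empty_iff_forall_notMem.mpr ?_
      rintro n ⟨m, rfl, w, hW, hw⟩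
      exact h ⟨m, w, hW, hw⟩
    have htop : G.walkInf v false true = ⊤ := by
      rw [ColoredMultigraph.walkInf, hempty, sInf_empty]
    rw [htop, top_le_iff] at hvIK
    exact ENat.coe_ne_top R hvIK
  obtain ⟨m0, w0, hW0, hw0⟩ := hSne
  -- prepend the K-edge {u,v} to a walk from v starting with an I-edge
  have hcomp : ∀ (m' : ℕ) (w' : V), G.AltWalk v false true w' m' →
      G.AltWalk u true true w' (1 + m') := by
    intro m' w' hW'
    exact ColoredMultigraph.AltWalk.cons e0 u v true true w' m' hj0'
      (iff_of_true hk0 rfl) hW'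
  -- every (v,I,K,0)-walk has K-length at least R
  have hge : ∀ (m' : ℕ) (w' : V), G.AltWalk v false true w' m' → ¬ G.isX w' →
      R ≤ m' := by
    intro m' w' hW' hw'
    have h1 : G.walkInf u true true ≤ ((1 + m' : ℕ) : ℕ∞) :=
      sInf_le ⟨1 + m', rfl, w', hcomp m' w' hW', hw'⟩
    have h2 : (R : ℕ∞) < ((1 + m' : ℕ) : ℕ∞) := lt_of_lt_of_le huKK h1
    have h3 : R < 1 + m' := by exact_mod_cast h2
    omega
  have hvIKval : G.walkInf v false true = (R : ℕ∞) := by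
    refine le_antisymm hvIK (le_sInf ?_)
    rintro n ⟨m', rfl, w', hW', hw'⟩
    exact_mod_cast hge m' w' hW' hw'
  -- walkSup v true ≥ 1
  have hSupV1 : (1 : ℕ∞) ≤ G.walkSup v true := by
    obtain ⟨e1, hmem, hK1⟩ := hG.1 v hv
    obtain ⟨b, hb⟩ := Sym2.mem_iff_exists.mp hmem
    exact le_sSup ⟨1, by norm_num, true, b,
      ColoredMultigraph.AltWalk.single e1 v b true hb (iff_of_true hK1 rfl)⟩
  -- walkSup u true ≥ R
  have hSupU : (R : ℕ∞) ≤ G.walkSup u true := by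
    have hW : G.AltWalk u true true w0 (1 + m0) := hcomp m0 w0 hW0
    have h1 : ((1 + m0 : ℕ) : ℕ∞) ≤ G.walkSup u true :=
      le_sSup ⟨1 + m0, rfl, true, w0, hW⟩
    refine le_trans ?_ h1
    have hm0 : R ≤ 1 + m0 := le_trans (hge m0 w0 hW0 hw0) (by omega)
    exact_mod_cast hm0
  -- walkSup u false ≤ walkSup v true
  have hSupUf : G.walkSup u false ≤ G.walkSup v true := by
    refine sSup_le ?_
    rintro n ⟨m', rfl, Y, z, hW'⟩
    have hW2 : G.AltWalk v true Y z (1 + m') :=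
      ColoredMultigraph.AltWalk.cons e0 v u true Y z m' hj0
        (iff_of_true hk0 rfl) hW'
    have h1 : ((1 + m' : ℕ) : ℕ∞) ≤ G.walkSup v true :=
      le_sSup ⟨1 + m', rfl, Y, z, hW2⟩
    refine le_trans ?_ h1
    exact_mod_cast Nat.le_add_left m' 1
  -- values of p and q
  have hqv : G.qv R v = (R : ℕ∞) := by
    rw [ColoredMultigraph.qv, if_pos hvIK, ColoredMultigraph.bnd,
      min_eq_right (le_of_lt hvKK)]
  have hpv : G.pv R v = min (G.walkSup v true) (R : ℕ∞) := by
    rw [ColoredMultigraph.pv, if_neg (not_le.mpr hvKK), ColoredMultigraph.bnd,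
      ColoredMultigraph.Bnd, hvIKval, min_self, min_comm ((R : ℕ∞)),
      min_assoc, min_self]
  have hpu : G.pv R u = (R : ℕ∞) := by
    rw [ColoredMultigraph.pv, if_neg (not_le.mpr huKK), ColoredMultigraph.bnd,
      ColoredMultigraph.Bnd, min_eq_right (le_of_lt huIK),
      min_eq_right hSupU, min_self]
  have hqu : G.qv R u = min (G.walkSup u false) (R : ℕ∞) := by
    rw [ColoredMultigraph.qv, if_neg (not_le.mpr huIK), ColoredMultigraph.bnd,
      ColoredMultigraph.Bnd, min_eq_right (le_of_lt huKK),
      min_comm ((R : ℕ∞)), min_assoc, min_self]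
  have hquv : G.qv R u ≤ G.pv R v := by
    rw [hqu, hpv]; exact min_le_min hSupUf le_rfl
  have hpv1 : (1 : ℕ∞) ≤ G.pv R v := by
    rw [hpv]; exact le_min hSupV1 (by exact_mod_cast hR)
  have hpvR : G.pv R v ≤ (R : ℕ∞) := by rw [hpv]; exact min_le_right _ _
  have hpvne : G.pv R v ≠ ⊤ := ne_top_of_le_ne_top (ENat.coe_ne_top R) hpvR
  have hA1 : 1 ≤ (G.pv R v).toNat := by
    have := ENat.toNat_le_toNat hpv1 hpvne
    simpa using this
  have hDA : (G.qv R u).toNat ≤ (G.pv R v).toNat :=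
    ENat.toNat_le_toNat hquv hpvne
  have hqvt : (G.qv R v).toNat = R := by rw [hqv]; simp
  have hput : (G.pv R u).toNat = R := by rw [hpu]; simp
  -- utility ≤ 1
  obtain ⟨eK, z, hjK, hkK⟩ := ColoredMultigraph.altWalk_last hW0
  have hKeK : G.isK eK := hkK.mpr rfl
  have hz : G.isX z := (hG.2.2.2 eK z w0 hjK).resolve_right hw0
  obtain ⟨eI, hmemI, hnK⟩ := hG.2.1 z hz
  obtain ⟨y, hy⟩ := Sym2.mem_iff_exists.mp hmemI
  have hzy : xstar z + xstar y ≤ 1 := hxstar.2.2 eI z y hy hnK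
  have hz1 : xstar z ≤ 1 := by linarith [hxstar.1 y]
  have hw00 : xstar w0 = 0 := hxstar.2.1 w0 hw0
  have hbdd : BddBelow {r : ℝ | ∃ e a b, G.Joins e a b ∧ G.isK e ∧
      r = xstar a + xstar b} := by
    refine ⟨0, ?_⟩
    rintro r ⟨e, a, b, _, _, rfl⟩
    exact add_nonneg (hxstar.1 a) (hxstar.1 b)
  have hωle : G.utility xstar ≤ 1 := by
    refine le_trans (csInf_le hbdd ⟨eK, z, w0, hjK, hKeK, rfl⟩) ?_
    rw [hw00]; linarith
  -- final numeric computation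
  rw [ColoredMultigraph.xval, if_pos hv, ColoredMultigraph.xval, if_pos hu,
    hqvt, hput]
  refine le_trans hωle ?_
  have ha : (1 : ℝ) ≤ ((G.pv R v).toNat : ℝ) := by exact_mod_cast hA1
  have hd : (0 : ℝ) ≤ ((G.qv R u).toNat : ℝ) := Nat.cast_nonneg _
  have hda : ((G.qv R u).toNat : ℝ) ≤ ((G.pv R v).toNat : ℝ) := by
    exact_mod_cast hDA
  have hr : (1 : ℝ) ≤ (R : ℝ) := by exact_mod_cast hR
  set A := ((G.pv R v).toNat : ℝ)
  set D := ((G.qv R u).toNat : ℝ)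
  have h1 : (0 : ℝ) < A + R := by linarith
  have h2 : (0 : ℝ) < (R : ℝ) + D := by linarith
  rw [div_add_div _ _ (ne_of_gt h1) (ne_of_gt h2), le_div_iff₀ (mul_pos h1 h2)]
  nlinarith [mul_le_mul_of_nonneg_left hda (le_trans zero_le_one hr)]
end
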